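/- arXiv:0707.2124 — 3 statements merged into one kernel-verified Lean document; each statement's English description precedes it below -/
import Mathlib

section
/- For all real numbers a > 0 and b > 0, the integral from 0 to ∞ of (ln x)/(a^2 + b^2·x^2) dx equals (π/(2ab))·ln(a/b). -/
/-!
Substituting `x = (a / b) y` turns the integral into `(a b)⁻¹ ∫₀^∞ (log (a / b) + log y) / (1 + y²) dy`.
The inversion `y ↦ y⁻¹` carries `log y / (1 + y²) dy` to its negative, so that part integrates to
zero, while `∫₀^∞ dy / (1 + y²) = π / 2`. The same inversion reduces integrability of
`log y / (1 + y²)` at infinity to integrability of `log` at `0`.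
-/

open Real Set MeasureTheory

section InvSubstitution

variable {E : Type*} [NormedAddCommGroup E] [NormedSpace ℝ E] {s : Set ℝ}

lemma hasDerivWithinAt_inv_of_subset_Ioi (hs : s ⊆ Ioi 0) :
    ∀ x ∈ s, HasDerivWithinAt (·⁻¹) (-(x ^ 2)⁻¹) s x :=
  fun _ hx ↦ (hasDerivAt_inv (hs hx).ne').hasDerivWithinAt

lemma integrableOn_inv_iff_of_subset_Ioi (g : ℝ → E) (hs : MeasurableSet s) (hs₀ : s ⊆ Ioi 0) :
    IntegrableOn g s⁻¹ ↔ IntegrableOn (fun x ↦ (x ^ 2)⁻¹ • g x⁻¹) s := by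
  simpa [← image_inv_eq_inv] using integrableOn_image_iff_integrableOn_abs_deriv_smul hs
    (hasDerivWithinAt_inv_of_subset_Ioi hs₀) inv_injective.injOn g

lemma setIntegral_inv_eq_of_subset_Ioi (g : ℝ → E) (hs : MeasurableSet s) (hs₀ : s ⊆ Ioi 0) :
    ∫ x in s⁻¹, g x = ∫ x in s, (x ^ 2)⁻¹ • g x⁻¹ := by
  simpa [← image_inv_eq_inv] using integral_image_eq_integral_abs_deriv_smul hs
    (hasDerivWithinAt_inv_of_subset_Ioi hs₀) inv_injective.injOn g

end InvSubstitution

lemma inv_sq_mul_log_inv_div_one_add_inv_sq (x : ℝ) :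
    (x ^ 2)⁻¹ * (log x⁻¹ / (1 + x⁻¹ ^ 2)) = -(log x / (1 + x ^ 2)) := by
  rcases eq_or_ne x 0 with rfl | hx
  · simp
  · rw [log_inv]
    field_simp
    ring

lemma integrableOn_log_div_one_add_sq_Ioc :
    IntegrableOn (fun x ↦ log x / (1 + x ^ 2)) (Ioc 0 1) := by
  have hlog : IntegrableOn log (Ioc 0 1) :=
    (intervalIntegrable_iff_integrableOn_Ioc_of_le zero_le_one).1
      intervalIntegral.intervalIntegrable_log'
  have hcont : ContinuousOn (fun x : ℝ ↦ (1 + x ^ 2)⁻¹) (Icc 0 1) :=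
    (continuous_const.add (continuous_pow 2)).continuousOn.inv₀ fun x _ ↦
      (add_pos_of_pos_of_nonneg one_pos (sq_nonneg x)).ne'
  exact hlog.mul_continuousOn_of_subset hcont measurableSet_Ioc isCompact_Icc Ioc_subset_Icc_self

lemma integrableOn_log_div_one_add_sq :
    IntegrableOn (fun x ↦ log x / (1 + x ^ 2)) (Ioi 0) := by
  have hIoc := integrableOn_log_div_one_add_sq_Ioc
  have hIoi : IntegrableOn (fun x ↦ log x / (1 + x ^ 2)) (Ioi 1) := by
    have hinv : Ioi (1 : ℝ) = (Ioo 0 1)⁻¹ := by rw [inv_Ioo_0_left one_pos, inv_one]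
    rw [hinv, integrableOn_inv_iff_of_subset_Ioi _ measurableSet_Ioo Ioo_subset_Ioi_self]
    simp only [smul_eq_mul, inv_sq_mul_log_inv_div_one_add_inv_sq]
    exact (hIoc.mono_set Ioo_subset_Ioc_self).neg
  rw [← Ioc_union_Ioi_eq_Ioi zero_le_one]
  exact hIoc.union hIoi

lemma integral_log_div_one_add_sq : ∫ x in Ioi 0, log x / (1 + x ^ 2) = 0 := by
  have h :=
    setIntegral_inv_eq_of_subset_Ioi (fun x ↦ log x / (1 + x ^ 2)) measurableSet_Ioi subset_rfl
  have hinv : (Ioi (0 : ℝ))⁻¹ = Ioi 0 := by ext; simp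
  simp only [hinv, smul_eq_mul, inv_sq_mul_log_inv_div_one_add_inv_sq, integral_neg] at h
  linarith

lemma integral_log_mul_div_one_add_sq {c : ℝ} (hc : c ≠ 0) :
    ∫ x in Ioi 0, log (c * x) / (1 + x ^ 2) = π / 2 * log c := by
  have hsplit : EqOn (fun x ↦ log (c * x) / (1 + x ^ 2))
      (fun x ↦ log c * (1 + x ^ 2)⁻¹ + log x / (1 + x ^ 2)) (Ioi 0) := fun x hx ↦ by
    simp only [log_mul hc (ne_of_gt hx), div_eq_mul_inv, add_mul]
  rw [setIntegral_congr_fun measurableSet_Ioi hsplit,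
    integral_add (integrable_inv_one_add_sq.integrableOn.const_mul _)
      integrableOn_log_div_one_add_sq,
    integral_const_mul, integral_Ioi_inv_one_add_sq, arctan_zero, integral_log_div_one_add_sq]
  ring

/-- GR 4.231.8: for `a, b > 0`, `∫_0^∞ ln x / (a² + b² x²) dx = (π/(2ab)) ln(a/b)`. -/
theorem integral_log_div_quadratic (a b : ℝ) (ha : 0 < a) (hb : 0 < b) :
    ∫ x in Set.Ioi (0:ℝ), Real.log x / (a ^ 2 + b ^ 2 * x ^ 2) =
      Real.pi / (2 * a * b) * Real.log (a / b) := by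
  have hscale := integral_comp_mul_left_Ioi' (fun x ↦ log x / (a ^ 2 + b ^ 2 * x ^ 2)) 0
    (div_pos ha hb)
  have hquad (x : ℝ) : a ^ 2 + b ^ 2 * (a / b * x) ^ 2 = (1 + x ^ 2) * a ^ 2 := by
    field_simp
  simp only [mul_zero, hquad, ← div_div, integral_div, smul_eq_mul] at hscale
  rw [← hscale, integral_log_mul_div_one_add_sq (div_pos ha hb).ne']
  field_simp
end

section
/- For every natural number n and every real number x > 0, the integral from 0 to x of (ln t)/(1+t^2)^{n+1} dt equals (C(2n, n)/2^{2n})·( g_0(x) + p_n(x)·ln x - ∑_{k=1}^{n} (arctan x + p_{k-1}(x))/(2k-1) ), where g_0(x) = (ln x)·arctan x - ∫_0^x (arctan t)/t dt and p_j(x) = ∑_{k=1}^{j} (2^{2k}/(2k·C(2k, k)))·x/(1+x^2)^k (with p_0(x) = 0). -/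
open Real Finset
open MeasureTheory intervalIntegral Set Filter Topology

/-- The rational function `pⱼ(x) = ∑_{k=1}^j (2^{2k}/(2k C(2k,k))) x/(1+x²)^k`. -/
noncomputable def pFun (j : ℕ) (x : ℝ) : ℝ :=
  ∑ k ∈ Finset.Icc 1 j, (2 ^ (2 * k) / (2 * (k : ℝ) * (Nat.choose (2 * k) k : ℝ))) *
    (x / (1 + x ^ 2) ^ k)


lemma arctan_nonneg' {t : ℝ} (ht : 0 ≤ t) : 0 ≤ Real.arctan t := by
  have := Real.arctan_strictMono.monotone ht
  simpa [Real.arctan_zero] using this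

lemma arctan_le_self' {t : ℝ} (ht : 0 ≤ t) : Real.arctan t ≤ t := by
  have key : ∀ s : ℝ, HasDerivAt (fun u => u - Real.arctan u) (1 - 1/(1+s^2)) s :=
    fun s => (hasDerivAt_id s).sub (Real.hasDerivAt_arctan s)
  have mono : MonotoneOn (fun u => u - Real.arctan u) (Set.Ici 0) := by
    apply monotoneOn_of_deriv_nonneg (convex_Ici 0)
    · exact (continuous_id.sub Real.continuous_arctan).continuousOn
    · intro s hs
      exact ((key s).differentiableAt).differentiableWithinAt
    · intro s hs
      rw [(key s).deriv]
      have h1 : (1:ℝ) ≤ 1 + s^2 := by nlinarith [sq_nonneg s]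
      have : 1/(1+s^2) ≤ 1 := by
        rw [div_le_one (by linarith)]; linarith
      linarith
  have := mono (Set.mem_Ici.2 le_rfl) (Set.mem_Ici.2 ht) ht
  simpa using this

lemma abs_arctan_le (t : ℝ) : |Real.arctan t| ≤ |t| := by
  rcases le_total 0 t with h | h
  · rw [abs_of_nonneg (arctan_nonneg' h), abs_of_nonneg h]; exact arctan_le_self' h
  · have h1 : 0 ≤ Real.arctan (-t) := arctan_nonneg' (by linarith)
    rw [Real.arctan_neg] at h1
    rw [abs_of_nonpos (by linarith), abs_of_nonpos h, ← Real.arctan_neg]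
    exact arctan_le_self' (by linarith)

lemma ibp_log {u v : ℝ → ℝ} {x : ℝ} (hx : 0 < x)
    (hu : ∀ t : ℝ, 0 < t → HasDerivAt u (v t) t)
    (hlim : Tendsto (fun t => Real.log t * u t) (𝓝[>] (0:ℝ)) (𝓝 0))
    (h1 : IntervalIntegrable (fun t => Real.log t * v t) volume 0 x)
    (h2 : IntervalIntegrable (fun t => u t / t) volume 0 x) :
    ∫ t in (0:ℝ)..x, Real.log t * v t
      = Real.log x * u x - ∫ t in (0:ℝ)..x, u t / t := by
  set w : ℝ → ℝ := fun t => u t / t + Real.log t * v t with hw_def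
  have hw : IntervalIntegrable w volume 0 x := h2.add h1
  have key : ∀ a : ℝ, 0 < a → a ≤ x →
      ∫ t in a..x, w t = Real.log x * u x - Real.log a * u a := by
    intro a ha hax
    apply integral_eq_sub_of_hasDerivAt
    · intro t ht
      rw [Set.uIcc_of_le hax] at ht
      have ht0 : 0 < t := lt_of_lt_of_le ha ht.1
      have h' := (Real.hasDerivAt_log ht0.ne').mul (hu t ht0)
      have he : t⁻¹ * u t + Real.log t * v t = w t := by
        simp only [hw_def]; ring
      exact he ▸ h'
    · apply hw.mono_set
      rw [Set.uIcc_of_le hax, Set.uIcc_of_le hx.le]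
      exact Set.Icc_subset_Icc ha.le le_rfl
  have hmem : Set.Ioo (0:ℝ) x ∈ 𝓝[>] (0:ℝ) := by
    rw [← Set.Ioi_inter_Iio]
    exact inter_mem_nhdsWithin _ (Iio_mem_nhds hx)
  have hle : 𝓝[>] (0:ℝ) ≤ 𝓝[Set.uIcc 0 x] (0:ℝ) := by
    apply le_trans (nhdsWithin_le_iff.2 hmem)
    apply nhdsWithin_mono
    rw [Set.uIcc_of_le hx.le]
    exact fun t ht => ⟨ht.1.le, ht.2.le⟩
  have htend0 : Tendsto (fun a => ∫ t in (0:ℝ)..a, w t) (𝓝[>] (0:ℝ)) (𝓝 0) := by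
    have hc := (continuousOn_primitive_interval' hw Set.left_mem_uIcc 0 Set.left_mem_uIcc).tendsto
    simp only [intervalIntegral.integral_same] at hc
    exact hc.mono_left hle
  -- Φ a = ∫_a^x w tends to ∫_0^x w
  have htendΦ : Tendsto (fun a => ∫ t in a..x, w t) (𝓝[>] (0:ℝ))
      (𝓝 (∫ t in (0:ℝ)..x, w t)) := by
    have : ∀ᶠ a in 𝓝[>] (0:ℝ),
        (∫ t in (0:ℝ)..x, w t) - (∫ t in (0:ℝ)..a, w t) = ∫ t in a..x, w t := by
      filter_upwards [hmem] with a ha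
      have hia : IntervalIntegrable w volume 0 a := by
        apply hw.mono_set
        rw [Set.uIcc_of_le ha.1.le, Set.uIcc_of_le hx.le]
        exact Set.Icc_subset_Icc le_rfl ha.2.le
      have hax : IntervalIntegrable w volume a x := by
        apply hw.mono_set
        rw [Set.uIcc_of_le ha.2.le, Set.uIcc_of_le hx.le]
        exact Set.Icc_subset_Icc ha.1.le le_rfl
      rw [← integral_add_adjacent_intervals hia hax]
      ring
    have h2' := (tendsto_const_nhds (x := ∫ t in (0:ℝ)..x, w t) (f := 𝓝[>] (0:ℝ))).sub htend0
    rw [sub_zero] at h2'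
    exact h2'.congr' this
  -- RHS limit
  have htendR : Tendsto (fun a => Real.log x * u x - Real.log a * u a) (𝓝[>] (0:ℝ))
      (𝓝 (Real.log x * u x)) := by
    have := (tendsto_const_nhds (x := Real.log x * u x) (f := 𝓝[>] (0:ℝ))).sub hlim
    simpa using this
  have heq : ∫ t in (0:ℝ)..x, w t = Real.log x * u x := by
    refine tendsto_nhds_unique ?_ htendR
    refine htendΦ.congr' ?_
    filter_upwards [hmem] with a ha
    exact key a ha.1 ha.2.le
  have hsplit : ∫ t in (0:ℝ)..x, w t
      = (∫ t in (0:ℝ)..x, u t / t) + ∫ t in (0:ℝ)..x, Real.log t * v t :=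
    integral_add h2 h1
  rw [hsplit] at heq
  linarith


noncomputable def cc (n : ℕ) : ℝ := (Nat.choose (2 * n) n : ℝ) / 2 ^ (2 * n)

lemma choose_pos_real (n : ℕ) : (0:ℝ) < (Nat.choose (2*n) n : ℝ) := by
  exact_mod_cast Nat.choose_pos (by omega)

lemma cc_pos (n : ℕ) : 0 < cc n := div_pos (choose_pos_real n) (by positivity)

lemma choose_succ_real (n : ℕ) :
    ((n:ℝ)+1) * (Nat.choose (2*(n+1)) (n+1) : ℝ) = 2*(2*(n:ℝ)+1) * (Nat.choose (2*n) n : ℝ) := by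
  have h := Nat.succ_mul_centralBinom_succ n
  have h' : (((n+1) * Nat.centralBinom (n+1) : ℕ) : ℝ)
      = ((2 * (2*n+1) * Nat.centralBinom n : ℕ) : ℝ) := congrArg (Nat.cast (R := ℝ)) h
  unfold Nat.centralBinom at h'
  push_cast at h'
  push_cast
  linarith

lemma cc_rec (n : ℕ) : cc (n+1) * (2*(n:ℝ)+2) = cc n * (2*(n:ℝ)+1) := by
  unfold cc
  have h := choose_succ_real n
  have h2 : (2:ℝ) ^ (2*(n+1)) = 2^(2*n) * 4 := by rw [mul_add, pow_add]; norm_num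
  rw [h2]
  have hn : ((n:ℝ)+1) ≠ 0 := by positivity
  rw [div_mul_eq_mul_div, div_mul_eq_mul_div, div_eq_div_iff (by positivity) (by positivity)]
  linear_combination 2 * (2:ℝ)^(2*n) * h

lemma coeff_id (n : ℕ) :
    cc (n+1) * (2 ^ (2*(n+1)) / (2 * ((n:ℝ)+1) * (Nat.choose (2*(n+1)) (n+1) : ℝ)))
      = 1 / (2*(n:ℝ)+2) := by
  unfold cc
  have hC : (0:ℝ) < (Nat.choose (2*(n+1)) (n+1) : ℝ) := choose_pos_real (n+1)
  have hn : (0:ℝ) < (n:ℝ)+1 := by positivity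
  rw [div_mul_div_comm]
  rw [div_eq_div_iff (by positivity) (by positivity)]
  ring

lemma pFun_succ (n : ℕ) (x : ℝ) :
    pFun (n+1) x = pFun n x
      + (2 ^ (2*(n+1)) / (2 * ((n:ℝ)+1) * (Nat.choose (2*(n+1)) (n+1) : ℝ)))
        * (x / (1 + x^2) ^ (n+1)) := by
  unfold pFun
  rw [Finset.sum_Icc_succ_top (by omega : 1 ≤ n+1)]
  push_cast
  ring

lemma pFun_zero_eq (x : ℝ) : pFun 0 x = 0 := by
  unfold pFun
  rw [Finset.Icc_eq_empty (by omega)]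
  simp

lemma pFun_at_zero (n : ℕ) : pFun n 0 = 0 := by
  unfold pFun
  apply Finset.sum_eq_zero
  intro k hk
  simp

lemma one_add_sq_pos (t : ℝ) : (0:ℝ) < 1 + t^2 := by positivity

lemma hasDerivAt_core (n : ℕ) (t : ℝ) :
    HasDerivAt (fun s : ℝ => s / (1 + s^2) ^ (n+1))
      ((2*(n:ℝ)+2) / (1+t^2)^(n+2) - (2*(n:ℝ)+1) / (1+t^2)^(n+1)) t := by
  have h1 : HasDerivAt (fun s : ℝ => 1 + s^2) (2*t) t := by
    simpa using ((hasDerivAt_pow 2 t).const_add 1)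
  have h2 : HasDerivAt (fun s : ℝ => (1 + s^2) ^ (n+1))
      (((n:ℝ)+1) * (1+t^2)^n * (2*t)) t := by
    have := h1.fun_pow (n+1)
    simpa [mul_comm, mul_assoc, Nat.add_sub_cancel] using this
  have h3 := (hasDerivAt_id t).div h2 (by positivity)
  refine h3.congr_deriv ?_
  have hp : (0:ℝ) < 1 + t^2 := one_add_sq_pos t
  simp only [id]
  field_simp
  ring

lemma hasDerivAt_Gn (n : ℕ) (t : ℝ) :
    HasDerivAt (fun s : ℝ => cc n * (Real.arctan s + pFun n s))
      (1 / (1+t^2)^(n+1)) t := by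
  induction n with
  | zero =>
    have h := Real.hasDerivAt_arctan t
    have hfun : (fun s : ℝ => cc 0 * (Real.arctan s + pFun 0 s)) = Real.arctan := by
      funext s
      simp [cc, pFun_zero_eq]
    rw [hfun]
    simpa using h
  | succ n ih =>
    have hcc : cc n ≠ 0 := (cc_pos n).ne'
    have hco2 := coeff_id n
    set co : ℝ := 2 ^ (2*(n+1)) / (2 * ((n:ℝ)+1) * (Nat.choose (2*(n+1)) (n+1) : ℝ)) with hco
    clear_value co
    have hfun : (fun s : ℝ => cc (n+1) * (Real.arctan s + pFun (n+1) s))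
        = fun s : ℝ => (cc (n+1) / cc n) * (cc n * (Real.arctan s + pFun n s))
            + (cc (n+1) * co) * (s / (1 + s^2) ^ (n+1)) := by
      funext s
      rw [pFun_succ, ← hco]
      field_simp
      ring
    rw [hfun]
    have hd := (ih.const_mul (cc (n+1) / cc n)).fun_add
      ((hasDerivAt_core n t).const_mul (cc (n+1) * co))
    refine hd.congr_deriv ?_
    have hrec := cc_rec n
    rw [hco2]
    have hccr : cc (n+1) / cc n = (2*(n:ℝ)+1) / (2*(n:ℝ)+2) := by
      rw [div_eq_div_iff hcc (by positivity)]
      linarith [cc_rec n]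
    rw [hccr]
    have hp : (0:ℝ) < 1 + t^2 := one_add_sq_pos t
    have hn2 : (2*(n:ℝ)+2) ≠ 0 := by positivity
    field_simp
    ring

lemma J_eq (n : ℕ) {x : ℝ} (hx : 0 < x) :
    ∫ t in (0:ℝ)..x, 1 / (1+t^2)^(n+1) = cc n * (Real.arctan x + pFun n x) := by
  have h := integral_eq_sub_of_hasDerivAt (f := fun s : ℝ => cc n * (Real.arctan s + pFun n s))
    (f' := fun t => 1 / (1+t^2)^(n+1)) (a := 0) (b := x)
    (fun t _ => hasDerivAt_Gn n t) ?_
  · rw [h]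
    simp [pFun_at_zero]
  · apply ContinuousOn.intervalIntegrable
    apply ContinuousOn.div continuousOn_const
    · exact (ContinuousOn.pow (by fun_prop) _)
    · intro t _
      positivity

lemma intInt_log01 : IntervalIntegrable Real.log volume 0 1 := by
  have h : IntegrableOn (fun t : ℝ => -Real.log t) (Set.Ioc 0 1) volume := by
    apply integrableOn_deriv_of_nonneg (g := fun t => t - t * Real.log t)
    · exact (continuous_id.sub Real.continuous_mul_log).continuousOn
    · intro t ht
      have h1 : HasDerivAt (fun t : ℝ => t * Real.log t) (Real.log t + 1) t := by
        have := (hasDerivAt_id t).fun_mul (Real.hasDerivAt_log (ne_of_gt ht.1))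
        simpa [mul_comm, mul_inv_cancel₀ (ne_of_gt ht.1)] using this
      simpa using (hasDerivAt_id t).fun_sub h1
    · intro t ht
      simpa using Real.log_nonpos ht.1.le ht.2.le
  have h2 : IntegrableOn Real.log (Set.Ioc 0 1) volume :=
    h.neg.congr (MeasureTheory.ae_of_all _ fun t => by simp)
  exact ⟨by simpa [Set.uIoc_of_le (by norm_num : (0:ℝ) ≤ 1)] using h2,
    by simpa [Set.uIoc_of_le (by norm_num : (0:ℝ) ≤ 1)] using (h2.mono_set (by norm_num))⟩

lemma intInt_log {x : ℝ} (hx : 0 < x) : IntervalIntegrable Real.log volume 0 x := by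
  rcases le_total x 1 with h | h
  · exact intInt_log01.mono_set
      (by rw [Set.uIcc_of_le hx.le, Set.uIcc_of_le zero_le_one]; exact Set.Icc_subset_Icc le_rfl h)
  · refine intInt_log01.trans ?_
    apply ContinuousOn.intervalIntegrable
    intro t ht
    rw [Set.uIcc_of_le h] at ht
    exact (Real.continuousAt_log (by linarith [ht.1])).continuousWithinAt

lemma intInt_log_div (m : ℕ) {x : ℝ} (hx : 0 < x) :
    IntervalIntegrable (fun t => Real.log t / (1+t^2)^m) volume 0 x := by
  apply (intInt_log hx).mono_fun
  · apply Measurable.aestronglyMeasurable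
    exact Real.measurable_log.div ((measurable_const.add (measurable_id.pow_const 2)).pow_const m)
  · apply MeasureTheory.ae_of_all
    intro t
    have h1 : (1:ℝ) ≤ (1+t^2)^m := one_le_pow₀ (by nlinarith [sq_nonneg t])
    simp only [norm_div, Real.norm_eq_abs]
    rw [abs_of_pos (by positivity : (0:ℝ) < (1+t^2)^m)]
    exact div_le_self (abs_nonneg _) h1

lemma intInt_bounded_one {f : ℝ → ℝ} {x : ℝ} (hf : Measurable f)
    (hb : ∀ t, |f t| ≤ 1) : IntervalIntegrable f volume 0 x := by
  apply (_root_.intervalIntegrable_const (c := (1:ℝ)) (μ := volume) (a := 0) (b := x)).mono_fun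
    hf.aestronglyMeasurable
  apply MeasureTheory.ae_of_all
  intro t
  simpa using hb t

lemma tendsto_log_mul_of_abs_le {u : ℝ → ℝ} (h : ∀ t : ℝ, 0 < t → |u t| ≤ t) :
    Tendsto (fun t => Real.log t * u t) (𝓝[>] (0:ℝ)) (𝓝 0) := by
  have h0 : Tendsto (fun t : ℝ => Real.log t * t) (𝓝[>] (0:ℝ)) (𝓝 0) := by
    have := tendsto_log_mul_rpow_nhdsGT_zero one_pos
    refine this.congr' ?_
    filter_upwards [self_mem_nhdsWithin] with t ht
    rw [Real.rpow_one]
  have h1 : Tendsto (fun t : ℝ => |Real.log t * t|) (𝓝[>] (0:ℝ)) (𝓝 0) := by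
    have := h0.abs; simpa using this
  apply squeeze_zero_norm' _ h1
  filter_upwards [self_mem_nhdsWithin] with t ht
  have ht' : (0:ℝ) < t := ht
  rw [Real.norm_eq_abs, abs_mul, abs_mul, abs_of_pos ht']
  exact mul_le_mul_of_nonneg_left (h t ht') (abs_nonneg _)



lemma hco3 (n : ℕ) :
    (2 ^ (2*(n+1)) / (2 * ((n:ℝ)+1) * (Nat.choose (2*(n+1)) (n+1) : ℝ)))
      = 1 / (cc n * (2*(n:ℝ)+1)) := by
  have h1 := coeff_id n
  have h2 := cc_rec n
  have hcc1 : cc (n+1) ≠ 0 := (cc_pos (n+1)).ne'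
  have hcc0 : cc n ≠ 0 := (cc_pos n).ne'
  have h22 : (2*(n:ℝ)+2) ≠ 0 := by positivity
  have h21 : (2*(n:ℝ)+1) ≠ 0 := by positivity
  have hD : (2 * ((n:ℝ)+1) * (Nat.choose (2*(n+1)) (n+1) : ℝ)) ≠ 0 := by
    have := choose_pos_real (n+1)
    positivity
  set q := (2 ^ (2*(n+1)) / (2 * ((n:ℝ)+1) * (Nat.choose (2*(n+1)) (n+1) : ℝ))) with hq
  rw [eq_div_iff (mul_ne_zero hcc0 h21), ← h2,
    show q * (cc (n+1) * (2*(n:ℝ)+2)) = (cc (n+1) * q) * (2*(n:ℝ)+2) by ring, h1,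
    one_div_mul_cancel h22]

lemma cc_succ_eq (n : ℕ) : cc (n+1) = cc n * (2*(n:ℝ)+1) / (2*(n:ℝ)+2) := by
  have h2 := cc_rec n
  have h22 : (2*(n:ℝ)+2) ≠ 0 := by positivity
  field_simp
  linarith

/-- Theorem 6.8: for `n ∈ ℕ` and `x > 0`,
`∫_0^x ln t/(1+t²)^(n+1) dt
  = (C(2n,n)/2^{2n}) [g₀(x) + pₙ(x) ln x - ∑_{k=1}^n (arctan x + p_{k-1}(x))/(2k-1)]`,
where `g₀(x) = (ln x) arctan x - ∫_0^x arctan t / t dt`. -/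
theorem integral_log_div_one_add_sq_pow_closed_form (n : ℕ) (x : ℝ) (hx : 0 < x) :
    ∫ t in (0:ℝ)..x, Real.log t / (1 + t ^ 2) ^ (n + 1) =
      ((Nat.choose (2 * n) n : ℝ) / 2 ^ (2 * n)) *
        ((Real.log x * Real.arctan x - ∫ t in (0:ℝ)..x, Real.arctan t / t)
          + pFun n x * Real.log x
          - ∑ k ∈ Finset.Icc 1 n,
              (Real.arctan x + pFun (k - 1) x) / (2 * (k : ℝ) - 1)) := by
  induction n with
  | zero =>
    have hibp := ibp_log (u := Real.arctan) (v := fun t => 1/(1+t^2)) hx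
      (fun t _ => by simpa using Real.hasDerivAt_arctan t)
      (tendsto_log_mul_of_abs_le (fun t ht => by
        simpa [abs_of_pos ht] using abs_arctan_le t))
      (by
        have hfun : (fun t : ℝ => Real.log t * (1/(1+t^2)))
            = fun t => Real.log t / (1+t^2)^1 := by
          funext t; rw [pow_one, mul_one_div]
        rw [hfun]; exact intInt_log_div 1 hx)
      (intInt_bounded_one (Real.measurable_arctan.div measurable_id) (fun t => by
        rcases eq_or_ne t 0 with rfl | ht
        · simp
        · rw [abs_div, div_le_one (abs_pos.2 ht)]
          exact abs_arctan_le t))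
    have hfun2 : (fun t : ℝ => Real.log t * (1/(1+t^2)))
        = fun t : ℝ => Real.log t / (1+t^2)^(0+1) := by
      funext t; rw [zero_add, pow_one, mul_one_div]
    rw [hfun2] at hibp
    rw [hibp]
    rw [pFun_zero_eq]
    norm_num
  | succ n ih =>
    set u : ℝ → ℝ := fun t => t / (1+t^2)^(n+1) with hu_def
    set v : ℝ → ℝ := fun t =>
      (2*(n:ℝ)+2)/(1+t^2)^(n+2) - (2*(n:ℝ)+1)/(1+t^2)^(n+1) with hv_def
    have hone_le : ∀ t : ℝ, (1:ℝ) ≤ (1+t^2)^(n+1) :=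
      fun t => one_le_pow₀ (by nlinarith [sq_nonneg t])
    have hfunv : (fun t : ℝ => Real.log t * v t)
        = fun t : ℝ => (2*(n:ℝ)+2) * (Real.log t / (1+t^2)^(n+2))
            - (2*(n:ℝ)+1) * (Real.log t / (1+t^2)^(n+1)) := by
      funext t; simp only [hv_def]; ring
    have hibp := ibp_log (u := u) (v := v) hx
      (fun t _ => hasDerivAt_core n t)
      (tendsto_log_mul_of_abs_le (fun t ht => by
        have h1 := hone_le t
        rw [hu_def]
        simp only
        rw [abs_of_nonneg (by positivity)]
        exact div_le_self ht.le h1))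
      (by
        rw [hfunv]
        exact ((intInt_log_div (n+2) hx).const_mul _).sub
          ((intInt_log_div (n+1) hx).const_mul _))
      (intInt_bounded_one
        (by
          apply Measurable.div _ measurable_id
          exact measurable_id.div
            ((measurable_const.add (measurable_id.pow_const 2)).pow_const (n+1)))
        (fun t => by
          rcases eq_or_ne t 0 with rfl | ht
          · simp [hu_def]
          · have heq : u t / t = 1 / (1+t^2)^(n+1) := by
              rw [hu_def]; field_simp
            rw [heq, abs_div, div_le_one (by positivity)]
            rw [abs_one, abs_pow, abs_of_pos (one_add_sq_pos t)]
            exact hone_le t))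
    -- compute ∫ u t / t
    have hJ : ∫ t in (0:ℝ)..x, u t / t = cc n * (Real.arctan x + pFun n x) := by
      rw [← J_eq n hx]
      apply intervalIntegral.integral_congr_ae
      apply MeasureTheory.ae_of_all
      intro t ht
      rw [Set.uIoc_of_le hx.le] at ht
      have ht0 : t ≠ 0 := ht.1.ne'
      rw [hu_def]; field_simp
    -- split LHS of hibp
    have hsplit : ∫ t in (0:ℝ)..x, Real.log t * v t
        = (2*(n:ℝ)+2) * (∫ t in (0:ℝ)..x, Real.log t / (1+t^2)^(n+2))
          - (2*(n:ℝ)+1) * (∫ t in (0:ℝ)..x, Real.log t / (1+t^2)^(n+1)) := by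
      rw [hfunv]
      rw [integral_sub ((intInt_log_div (n+2) hx).const_mul _)
        ((intInt_log_div (n+1) hx).const_mul _)]
      rw [intervalIntegral.integral_const_mul, intervalIntegral.integral_const_mul]
    rw [hsplit, hJ] at hibp
    -- sum split
    have hS : (∑ k ∈ Finset.Icc 1 (n+1),
          (Real.arctan x + pFun (k-1) x) / (2*(k:ℝ)-1))
        = (∑ k ∈ Finset.Icc 1 n, (Real.arctan x + pFun (k-1) x) / (2*(k:ℝ)-1))
          + (Real.arctan x + pFun n x) / (2*(n:ℝ)+1) := by
      rw [Finset.sum_Icc_succ_top (by omega : 1 ≤ n+1)]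
      congr 1
      simp only [Nat.add_sub_cancel]
      push_cast
      ring_nf
    -- put everything together
    have hccn : ((Nat.choose (2*(n+1)) (n+1) : ℝ) / 2 ^ (2*(n+1))) = cc (n+1) := rfl
    have hccn' : ((Nat.choose (2*n) n : ℝ) / 2 ^ (2*n)) = cc n := rfl
    rw [hccn'] at ih
    have h22 : (2*(n:ℝ)+2) ≠ 0 := by positivity
    have h21 : (2*(n:ℝ)+1) ≠ 0 := by positivity
    have hcc0 : cc n ≠ 0 := (cc_pos n).ne'
    have hx2 : ((1:ℝ)+x^2) ^ (n+1) ≠ 0 := by positivity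
    simp only [hu_def] at hibp
    simp only [show n+1+1 = n+2 from rfl]
    rw [hccn, hS, pFun_succ, hco3 n, cc_succ_eq n]
    have hI : (∫ t in (0:ℝ)..x, Real.log t / (1+t^2)^(n+2))
        = ((2*(n:ℝ)+1) * (∫ t in (0:ℝ)..x, Real.log t / (1+t^2)^(n+1))
            + Real.log x * (x/(1+x^2)^(n+1))
            - cc n * (Real.arctan x + pFun n x)) / (2*(n:ℝ)+2) := by
      rw [eq_div_iff h22]
      linarith [hibp]
    rw [hI, ih]
    field_simp
    ring
end

section
/- The integral from 0 to π/4 of ln(sin t) dt equals -(π/4)·ln 2 - G/2, and the integral from 0 to π/4 of ln(cos t) dt equals -(π/4)·ln 2 + G/2, where G = ∑_{k=0}^{∞} (-1)^k/(2k+1)^2 is Catalan's constant. -/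
/-!
Write `I` and `J` for the integrals of `log ∘ sin` and `log ∘ cos` over `[0, π/4]`. Since
`sin t cos t = sin (2t) / 2`, the classical value `∫₀^{π/2} log (sin t) dt = -(π/2) log 2` gives
`I + J = -(π/2) log 2`. The substitution `x = tan t` turns `I - J = ∫₀^{π/4} log (tan t) dt` into
`∫₀¹ log x / (1 + x²) dx`; expanding `1 / (1 + x²)` as a geometric series and integrating
termwise with `∫₀¹ x^{2k} log x dx = -1 / (2k + 1)²` shows that this is `-G`.
-/

open Real MeasureTheory Set intervalIntegral

theorem Real.log_sin_add_log_cos {t : ℝ} (hs : sin t ≠ 0) (hc : cos t ≠ 0) :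
    log (sin t) + log (cos t) = log (sin (2 * t)) - log 2 := by
  rw [sin_two_mul, log_mul (mul_ne_zero two_ne_zero hs) hc, log_mul two_ne_zero hs]
  ring

theorem integral_log_sin_add_integral_log_cos_pi_div_four :
    (∫ t in 0..π / 4, log (sin t)) + ∫ t in 0..π / 4, log (cos t) = -(π / 2) * log 2 := by
  have hπ := pi_pos
  have hquarter : (0 : ℝ) ≤ π / 4 := by positivity
  have hdouble : ∫ t in 0..π / 4, log (sin (2 * t)) = -(π / 4) * log 2 := by
    rw [integral_comp_mul_left (fun t ↦ log (sin t)) two_ne_zero, mul_zero,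
      show 2 * (π / 4) = π / 2 by ring, integral_log_sin_zero_pi_div_two, smul_eq_mul]
    ring
  have hsin2 : IntervalIntegrable (fun t ↦ log (sin (2 * t))) volume 0 (π / 4) := by
    have h := (intervalIntegrable_log_sin (a := 0) (b := π / 2)).comp_mul_left (c := 2)
    simpa [show π / 2 / 2 = π / 4 by ring] using h
  rw [← integral_add (f := fun t ↦ log (sin t)) (g := fun t ↦ log (cos t))
    intervalIntegrable_log_sin intervalIntegrable_log_cos]
  calc ∫ t in 0..π / 4, log (sin t) + log (cos t)
      = ∫ t in 0..π / 4, log (sin (2 * t)) - log 2 := by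
        refine integral_congr_ae (Filter.Eventually.of_forall fun t ht ↦ ?_)
        rw [uIoc_of_le hquarter] at ht
        exact log_sin_add_log_cos (sin_pos_of_pos_of_lt_pi ht.1 (by linarith [ht.2])).ne'
          (cos_pos_of_mem_Ioo ⟨by linarith [ht.1], by linarith [ht.2]⟩).ne'
    _ = -(π / 2) * log 2 := by
        rw [integral_sub hsin2 intervalIntegrable_const, hdouble, intervalIntegral.integral_const,
          smul_eq_mul]
        ring

theorem intervalIntegrable_pow_mul_log (n : ℕ) (a b : ℝ) :
    IntervalIntegrable (fun x ↦ x ^ n * log x) volume a b :=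
  intervalIntegrable_log'.continuousOn_mul (continuous_pow n).continuousOn

theorem integral_pow_mul_log (n : ℕ) :
    ∫ x in (0 : ℝ)..1, x ^ n * log x = -1 / (n + 1) ^ 2 := by
  set F : ℝ → ℝ := fun x ↦ x ^ (n + 1) * log x / (n + 1) - x ^ (n + 1) / (n + 1) ^ 2
  have hF_cont : ContinuousOn F (Icc 0 1) := by
    have hcont : Continuous fun x : ℝ ↦ x ^ (n + 1) * log x := by
      convert (continuous_pow n).mul continuous_mul_log using 1
      ext x
      simp only [Pi.mul_apply]
      ring
    fun_prop
  have hF_deriv : ∀ x ∈ Ioo (0 : ℝ) 1, HasDerivAt F (x ^ n * log x) x := by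
    intro x hx
    have hx0 : x ≠ 0 := hx.1.ne'
    refine ((((hasDerivAt_pow (n + 1) x).mul (hasDerivAt_log hx0)).div_const ((n : ℝ) + 1)).sub
      ((hasDerivAt_pow (n + 1) x).div_const (((n : ℝ) + 1) ^ 2))).congr_deriv ?_
    push_cast
    field_simp
    ring
  rw [integral_eq_sub_of_hasDerivAt_of_le zero_le_one hF_cont hF_deriv
    (intervalIntegrable_pow_mul_log n 0 1)]
  simp only [F, one_pow, log_one, mul_zero, zero_div, log_zero, zero_sub]
  ring

theorem hasSum_integral_log_div_one_add_sq :
    HasSum (fun k : ℕ ↦ -((-1 : ℝ) ^ k / (2 * k + 1) ^ 2))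
      (∫ x in (0 : ℝ)..1, log x / (1 + x ^ 2)) := by
  have hpow (n : ℕ) : ∫ x in Ioo (0 : ℝ) 1, x ^ n * log x = -1 / (n + 1) ^ 2 := by
    rw [← integral_Ioc_eq_integral_Ioo, ← integral_of_le zero_le_one, integral_pow_mul_log]
  set F : ℕ → ℝ → ℝ := fun k x ↦ (-1) ^ k * (x ^ (2 * k) * log x)
  have hF_int (k : ℕ) : IntegrableOn (F k) (Ioo 0 1) :=
    ((intervalIntegrable_iff_integrableOn_Ioo_of_le zero_le_one).mp
      (intervalIntegrable_pow_mul_log (2 * k) 0 1)).const_mul _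
  have hF_norm (k : ℕ) : ∫ x in Ioo (0 : ℝ) 1, ‖F k x‖ = 1 / (2 * k + 1) ^ 2 := by
    have hnorm : ∀ x ∈ Ioo (0 : ℝ) 1, ‖F k x‖ = -(x ^ (2 * k) * log x) := fun x hx ↦ by
      rw [norm_mul, norm_pow, norm_neg, norm_one, one_pow, one_mul, Real.norm_of_nonpos
        (mul_nonpos_of_nonneg_of_nonpos (pow_nonneg hx.1.le _) (log_nonpos hx.1.le hx.2.le))]
    rw [setIntegral_congr_fun measurableSet_Ioo hnorm, MeasureTheory.integral_neg, hpow]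
    push_cast
    ring
  have hF_tsum : ∀ x ∈ Ioo (0 : ℝ) 1, ∑' k, F k x = log x / (1 + x ^ 2) := fun x hx ↦ by
    have hgeom : ∑' k : ℕ, (-x ^ 2) ^ k = (1 + x ^ 2)⁻¹ := by
      rw [tsum_geometric_of_abs_lt_one, sub_neg_eq_add]
      rw [abs_neg, abs_of_nonneg (sq_nonneg x)]
      nlinarith [hx.1, hx.2]
    simp_rw [F, ← mul_assoc, pow_mul, ← mul_pow, neg_one_mul, tsum_mul_right, hgeom]
    ring
  have hsummable : Summable fun k : ℕ ↦ 1 / (2 * (k : ℝ) + 1) ^ 2 := by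
    have h := (Real.summable_one_div_nat_pow.mpr one_lt_two).comp_injective
      (i := fun k : ℕ ↦ 2 * k + 1) (fun a b h ↦ by simp only at h; omega)
    simpa [Function.comp_def] using h
  have hF_integral (k : ℕ) :
      ∫ x in Ioo (0 : ℝ) 1, F k x = -((-1 : ℝ) ^ k / (2 * k + 1) ^ 2) := by
    simp only [F, MeasureTheory.integral_const_mul, hpow]
    push_cast
    ring
  rw [integral_of_le zero_le_one, integral_Ioc_eq_integral_Ioo,
    ← setIntegral_congr_fun measurableSet_Ioo hF_tsum]
  simpa only [hF_integral] using
    hasSum_integral_of_summable_integral_norm hF_int (by simpa only [hF_norm] using hsummable)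

-- Since `log 0 = 0`, this also holds where `sin t` or `cos t` vanishes.
theorem Real.log_tan (t : ℝ) : log (tan t) = log (sin t) - log (cos t) := by
  rw [tan_eq_sin_div_cos]
  by_cases hs : sin t = 0
  · rcases sin_eq_zero_iff_cos_eq.mp hs with hc | hc <;> simp [hs, hc]
  by_cases hc : cos t = 0
  · rcases cos_eq_zero_iff_sin_eq.mp hc with hs | hs <;> simp [hs, hc]
  exact log_div hs hc

theorem integral_log_tan_pi_div_four :
    ∫ t in 0..π / 4, log (tan t) = ∫ x in (0 : ℝ)..1, log x / (1 + x ^ 2) := by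
  have hsubst := integral_comp_mul_deriv_of_deriv_nonneg (a := 0) (b := 1)
    (g := fun t ↦ log (tan t)) continuous_arctan.continuousOn
    (fun x _ ↦ hasDerivAt_arctan x) (fun x _ ↦ by positivity)
  rw [arctan_zero, arctan_one] at hsubst
  rw [← hsubst]
  refine integral_congr fun x _ ↦ ?_
  simp only [Function.comp_apply, tan_arctan, div_eq_mul_one_div (log x)]

theorem integral_log_sin_sub_integral_log_cos_pi_div_four :
    (∫ t in 0..π / 4, log (sin t)) - ∫ t in 0..π / 4, log (cos t) =
      -∑' k : ℕ, (-1 : ℝ) ^ k / (2 * (k : ℝ) + 1) ^ 2 := by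
  rw [← integral_sub (f := fun t ↦ log (sin t)) (g := fun t ↦ log (cos t))
    intervalIntegrable_log_sin intervalIntegrable_log_cos]
  simp_rw [← log_tan]
  rw [integral_log_tan_pi_div_four, ← hasSum_integral_log_div_one_add_sq.tsum_eq, tsum_neg]

/-- GR 4.224.2 and 4.224.5: `∫_0^{π/4} ln(sin t) dt = -(π/4) ln 2 - G/2` and
`∫_0^{π/4} ln(cos t) dt = -(π/4) ln 2 + G/2`, where `G` is Catalan's constant. -/
theorem integral_log_sin_cos_pi_div_four :
    (∫ t in (0:ℝ)..(Real.pi / 4), Real.log (Real.sin t) =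
      -(Real.pi / 4) * Real.log 2 - (∑' k : ℕ, (-1 : ℝ) ^ k / (2 * (k : ℝ) + 1) ^ 2) / 2) ∧
    (∫ t in (0:ℝ)..(Real.pi / 4), Real.log (Real.cos t) =
      -(Real.pi / 4) * Real.log 2 + (∑' k : ℕ, (-1 : ℝ) ^ k / (2 * (k : ℝ) + 1) ^ 2) / 2) := by
  have hsum := integral_log_sin_add_integral_log_cos_pi_div_four
  have hdiff := integral_log_sin_sub_integral_log_cos_pi_div_four
  constructor <;> linarith
end
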